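/- arXiv:1806.10485 — 4 statements merged into one kernel-verified Lean document; each statement's English description precedes it below -/
import Mathlib

section
/- Let L be a Lie superalgebra over a field of characteristic ≠ 2 and J° = L ⊕ ⟨1̄⟩ ⊕ L̄ the augmentation ideal of Jor(L). Then (a²)² = 0 for every a ∈ J°. -/
noncomputable section

/-- The sign `(-1)^i` for `i : ZMod 2`. -/
def sgn (K : Type) [Field K] (i : ZMod 2) : K := if i = 0 then 1 else -1

variable (K : Type) [Field K]

variable {V : Type} [AddCommGroup V] [Module K V]

/-- The linear span of all products `μ a b` with `a ∈ S`, `b ∈ T`. -/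
def mulSpan (μ : V →ₗ[K] V →ₗ[K] V) (S T : Submodule K V) : Submodule K V :=
  Submodule.span K {w | ∃ a ∈ S, ∃ b ∈ T, w = μ a b}

/-- A two-sided ideal of a (nonassociative) algebra with product `μ`. -/
def IsIdeal (μ : V →ₗ[K] V →ₗ[K] V) (I : Submodule K V) : Prop :=
  ∀ a : V, ∀ b ∈ I, μ a b ∈ I ∧ μ b a ∈ I

/-- The product respects the `ZMod 2`-grading. -/
def GradedMul (g : ZMod 2 → Submodule K V) (μ : V →ₗ[K] V →ₗ[K] V) : Prop :=
  ∀ i j : ZMod 2, ∀ a ∈ g i, ∀ b ∈ g j, μ a b ∈ g (i + j)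

/-- Supercommutativity: `a b = (-1)^{|a||b|} b a` on homogeneous elements. -/
def SuperComm (g : ZMod 2 → Submodule K V) (μ : V →ₗ[K] V →ₗ[K] V) : Prop :=
  ∀ i j : ZMod 2, ∀ a ∈ g i, ∀ b ∈ g j, μ a b = sgn K (i * j) • μ b a

/-- The linearized super Jordan identity on homogeneous elements. -/
def SuperJordan (g : ZMod 2 → Submodule K V) (μ : V →ₗ[K] V →ₗ[K] V) : Prop :=
  ∀ ia ib ic id : ZMod 2, ∀ a ∈ g ia, ∀ b ∈ g ib, ∀ c ∈ g ic, ∀ d ∈ g id,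
    μ (μ a b) (μ c d) + sgn K (ib * ic) • μ (μ a c) (μ b d)
        + sgn K ((ib + ic) * id) • μ (μ a d) (μ b c)
      = μ (μ (μ a b) c) d + sgn K (ib * (ic + id) + ic * id) • μ (μ (μ a d) c) b
        + sgn K (ia * (ib + ic + id) + ic * id) • μ (μ (μ b d) c) a

/-- A `ZMod 2`-graded algebra which is a Jordan superalgebra. -/
structure IsJordanSuper (g : ZMod 2 → Submodule K V) (μ : V →ₗ[K] V →ₗ[K] V) : Prop where
  internal : DirectSum.IsInternal g
  graded : GradedMul K g μ
  comm : SuperComm K g μ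
  jordan : SuperJordan K g μ

/-- A `ZMod 2`-graded algebra which is a Lie superalgebra. -/
structure IsLieSuper (g : ZMod 2 → Submodule K V) (br : V →ₗ[K] V →ₗ[K] V) : Prop where
  internal : DirectSum.IsInternal g
  graded : GradedMul K g br
  anti : ∀ i j : ZMod 2, ∀ x ∈ g i, ∀ y ∈ g j, br x y = -(sgn K (i * j)) • br y x
  jacobi : ∀ i j k : ZMod 2, ∀ x ∈ g i, ∀ y ∈ g j, ∀ z ∈ g k,
    br x (br y z) = br (br x y) z + sgn K (i * j) • br y (br x z)

/-- A Poisson superalgebra structure: a supercommutative associative unital product `m`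
and a super Lie bracket `p` related by the super Leibniz rule. -/
structure IsPoissonSuper (g : ZMod 2 → Submodule K V)
    (m p : V →ₗ[K] V →ₗ[K] V) (e : V) : Prop where
  internal : DirectSum.IsInternal g
  m_graded : GradedMul K g m
  assoc : ∀ a b c : V, m (m a b) c = m a (m b c)
  e_mem : e ∈ g 0
  one_mul : ∀ a : V, m e a = a
  mul_one : ∀ a : V, m a e = a
  comm : SuperComm K g m
  p_graded : GradedMul K g p
  anti : ∀ i j : ZMod 2, ∀ x ∈ g i, ∀ y ∈ g j, p x y = -(sgn K (i * j)) • p y x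
  jacobi : ∀ i j k : ZMod 2, ∀ x ∈ g i, ∀ y ∈ g j, ∀ z ∈ g k,
    p x (p y z) = p (p x y) z + sgn K (i * j) • p y (p x z)
  leibniz : ∀ j k : ZMod 2, ∀ a : V, ∀ b ∈ g j, ∀ c ∈ g k,
    p (m a b) c = m a (p b c) + sgn K (j * k) • m (p a c) b

/-- The `ZMod 2`-grading of the Kantor double `A ⊕ Ā`: the degree-`i` part is
`A_i ⊕ (Ā)_i` where `(Ā)_i = A_{i+1}` (i.e. `|ā| = 1 - |a|`). -/
def kanGrading (g : ZMod 2 → Submodule K V) : ZMod 2 → Submodule K (V × V) :=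
  fun i => (g i).prod (g (i + 1))

/-- The defining multiplication rules of the Kantor double `Kan(A) = A ⊕ Ā` of a
Poisson superalgebra `(A, m, p)`: `a•b = ab`, `a•b̄ = (ab)‾`, `ā•b = (-1)^{|b|}(ab)‾`,
`ā•b̄ = (-1)^{|b|}{a,b}`; an element `(a, b) : V × V` represents `a + b̄`. -/
structure KantorRules (g : ZMod 2 → Submodule K V) (m p : V →ₗ[K] V →ₗ[K] V)
    (μ : V × V →ₗ[K] V × V →ₗ[K] V × V) : Prop where
  plain_plain : ∀ a b : V, μ (a, 0) (b, 0) = (m a b, 0)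
  plain_bar : ∀ a b : V, μ (a, 0) (0, b) = (0, m a b)
  bar_plain : ∀ a : V, ∀ j : ZMod 2, ∀ b ∈ g j, μ (0, a) (b, 0) = (0, sgn K j • m a b)
  bar_bar : ∀ a : V, ∀ j : ZMod 2, ∀ b ∈ g j, μ (0, a) (0, b) = (sgn K j • p a b, 0)

/-- The unit `1` of the Jordan double `Jor(L) = ⟨1⟩ ⊕ L ⊕ ⟨1̄⟩ ⊕ L̄`; an element
`((α, x), (β, y))` of the carrier `(K × V) × (K × V)` represents `α1 + x + β1̄ + ȳ`. -/
def jOne (V : Type) [AddCommGroup V] [Module K V] : (K × V) × (K × V) := ((1, 0), (0, 0))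

/-- The odd element `1̄` of the Jordan double `Jor(L)`. -/
def jBarOne (V : Type) [AddCommGroup V] [Module K V] : (K × V) × (K × V) := ((0, 0), (1, 0))

/-- The embedding `L → Jor(L)`, `x ↦ x`. -/
def inclL (V : Type) [AddCommGroup V] [Module K V] : V →ₗ[K] (K × V) × (K × V) :=
  (LinearMap.inl K (K × V) (K × V)).comp (LinearMap.inr K K V)

/-- The embedding `L → Jor(L)`, `x ↦ x̄`. -/
def inclLBar (V : Type) [AddCommGroup V] [Module K V] : V →ₗ[K] (K × V) × (K × V) :=
  (LinearMap.inr K (K × V) (K × V)).comp (LinearMap.inr K K V)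

/-- The `ZMod 2`-grading of `Jor(L)`: even part `⟨1⟩ ⊕ L₀ ⊕ L̄₁`, odd part `L₁ ⊕ ⟨1̄⟩ ⊕ L̄₀`
(recall `|x̄| = 1 - |x|` and `1̄` is odd). -/
def jorGrading (g : ZMod 2 → Submodule K V) : ZMod 2 → Submodule K ((K × V) × (K × V)) :=
  fun i =>
    ((if i = 0 then (⊤ : Submodule K K) else ⊥).prod (g i)).prod
      ((if i = 0 then (⊥ : Submodule K K) else ⊤).prod (g (i + 1)))

/-- The defining multiplication rules of the Jordan double `Jor(L)` of a Lie
superalgebra `(L, [,])`: `1` is the unit, `x̄ • ȳ = [x,y]`, `x • 1̄ = x̄`,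
`1̄ • x = (-1)^{|x|} x̄`, and all other products of `1, L, 1̄, L̄` vanish. -/
structure JorRules (g : ZMod 2 → Submodule K V) (br : V →ₗ[K] V →ₗ[K] V)
    (μ : (K × V) × (K × V) →ₗ[K] (K × V) × (K × V) →ₗ[K] (K × V) × (K × V)) : Prop where
  one_mul : ∀ w, μ (jOne K V) w = w
  mul_one : ∀ w, μ w (jOne K V) = w
  l_l : ∀ x y : V, μ (inclL K V x) (inclL K V y) = 0
  l_lbar : ∀ x y : V, μ (inclL K V x) (inclLBar K V y) = 0
  lbar_l : ∀ x y : V, μ (inclLBar K V x) (inclL K V y) = 0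
  lbar_lbar : ∀ x y : V, μ (inclLBar K V x) (inclLBar K V y) = inclL K V (br x y)
  l_obar : ∀ x : V, μ (inclL K V x) (jBarOne K V) = inclLBar K V x
  obar_l : ∀ i : ZMod 2, ∀ x ∈ g i,
    μ (jBarOne K V) (inclL K V x) = sgn K i • inclLBar K V x
  obar_obar : μ (jBarOne K V) (jBarOne K V) = 0
  obar_lbar : ∀ x : V, μ (jBarOne K V) (inclLBar K V x) = 0
  lbar_obar : ∀ x : V, μ (inclLBar K V x) (jBarOne K V) = 0

/-- An algebra `(V, μ)` is just infinite if it is infinite-dimensional and every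
nonzero ideal has finite codimension. -/
def JustInfinite (μ : V →ₗ[K] V →ₗ[K] V) : Prop :=
  ¬ FiniteDimensional K V ∧
    ∀ I : Submodule K V, IsIdeal K μ I → I ≠ ⊥ → FiniteDimensional K (V ⧸ I)

end

/-! Write `a = u + β1̄ + w̄` and split `u = u₀ + u₁` by parity. Since `x • 1̄ = x̄` and
`1̄ • x = (-1)^{|x|} x̄`, the odd part cancels in `a²`, leaving `a² = [w,w] + 2β ū₀`. In the
square of `x + ȳ` only `ȳ • ȳ = [y,y]` survives, so `(a²)² = 4β² [u₀,u₀]`, and the bracket of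
an even element with itself vanishes by antisymmetry in characteristic `≠ 2`. -/

@[simp]
lemma sgn_zero (K : Type) [Field K] : sgn K 0 = 1 := if_pos rfl

@[simp]
lemma sgn_one (K : Type) [Field K] : sgn K 1 = -1 := if_neg one_ne_zero

lemma exists_add_eq_of_iSup_zmod_two_eq_top {R M : Type*} [Semiring R] [AddCommMonoid M]
    [Module R M] {g : ZMod 2 → Submodule R M} (hg : ⨆ i, g i = ⊤) (u : M) :
    ∃ u₀ ∈ g 0, ∃ u₁ ∈ g 1, u₀ + u₁ = u := by
  have hsup : g 0 ⊔ g 1 = ⊤ := by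
    rw [← hg]
    refine le_antisymm (sup_le (le_iSup g 0) (le_iSup g 1)) (iSup_le fun i => ?_)
    fin_cases i
    · exact le_sup_left
    · exact le_sup_right
  exact Submodule.mem_sup.mp (hsup ▸ Submodule.mem_top)

lemma IsLieSuper.br_self_eq_zero_of_mem_zero {K V : Type} [Field K] [AddCommGroup V]
    [Module K V] {g : ZMod 2 → Submodule K V} {br : V →ₗ[K] V →ₗ[K] V}
    (hL : IsLieSuper K g br) (hchar : (2 : K) ≠ 0) {x : V} (hx : x ∈ g 0) : br x x = 0 := by
  have hanti : br x x = -br x x := by simpa using hL.anti 0 0 x hx x hx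
  have htwo : (2 : K) • br x x = 0 := by
    rw [two_smul]
    nth_rewrite 1 [hanti]
    exact neg_add_cancel _
  exact (smul_eq_zero.mp htwo).resolve_left hchar

lemma eq_inclL_add_smul_jBarOne_add_inclLBar {K V : Type} [Field K] [AddCommGroup V]
    [Module K V] {a : (K × V) × (K × V)} (ha : a.1.1 = 0) :
    a = inclL K V a.1.2 + a.2.1 • jBarOne K V + inclLBar K V a.2.2 := by
  ext <;> simp [inclL, jBarOne, inclLBar, ha]

namespace JorRules

variable {K V : Type} [Field K] [AddCommGroup V] [Module K V] {g : ZMod 2 → Submodule K V}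
  {br : V →ₗ[K] V →ₗ[K] V}
  {μ : (K × V) × (K × V) →ₗ[K] (K × V) × (K × V) →ₗ[K] (K × V) × (K × V)}

lemma mul_self_inclL_add_inclLBar (hμ : JorRules K g br μ) (x y : V) :
    μ (inclL K V x + inclLBar K V y) (inclL K V x + inclLBar K V y) = inclL K V (br y y) := by
  simp only [map_add, LinearMap.add_apply, hμ.l_l, hμ.l_lbar, hμ.lbar_l, hμ.lbar_lbar,
    zero_add]

lemma mul_self_inclL_add_smul_jBarOne_add_inclLBar (hμ : JorRules K g br μ) {u₀ u₁ : V}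
    (h₀ : u₀ ∈ g 0) (h₁ : u₁ ∈ g 1) (β : K) (w : V) :
    μ (inclL K V (u₀ + u₁) + β • jBarOne K V + inclLBar K V w)
        (inclL K V (u₀ + u₁) + β • jBarOne K V + inclLBar K V w) =
      inclL K V (br w w) + inclLBar K V ((2 * β) • u₀) := by
  simp only [map_add, map_smul, LinearMap.add_apply, LinearMap.smul_apply, hμ.l_l, hμ.l_lbar,
    hμ.lbar_l, hμ.lbar_lbar, hμ.l_obar, hμ.obar_obar, hμ.obar_lbar, hμ.lbar_obar,
    hμ.obar_l 0 u₀ h₀, hμ.obar_l 1 u₁ h₁, sgn_zero, sgn_one]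
  module

end JorRules

/-- For every element `a` of the augmentation ideal
`J° = L ⊕ ⟨1̄⟩ ⊕ L̄` of `Jor(L)` one has `(a²)² = 0`. -/
theorem jordan_double_square_square_zero
    (K : Type) [Field K] (hchar : (2 : K) ≠ 0)
    {V : Type} [AddCommGroup V] [Module K V]
    (g : ZMod 2 → Submodule K V) (br : V →ₗ[K] V →ₗ[K] V)
    (hL : IsLieSuper K g br)
    (μ : (K × V) × (K × V) →ₗ[K] (K × V) × (K × V) →ₗ[K] (K × V) × (K × V))
    (hμ : JorRules K g br μ) :
    ∀ a ∈ ((⊥ : Submodule K K).prod ⊤).prod (⊤ : Submodule K (K × V)),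
      μ (μ a a) (μ a a) = 0 := by
  rintro a ⟨⟨ha, -⟩, -⟩
  obtain ⟨u₀, h₀, u₁, h₁, hu⟩ :=
    exists_add_eq_of_iSup_zmod_two_eq_top hL.internal.submodule_iSup_eq_top a.1.2
  rw [eq_inclL_add_smul_jBarOne_add_inclLBar ha, ← hu,
    hμ.mul_self_inclL_add_smul_jBarOne_add_inclLBar h₀ h₁, hμ.mul_self_inclL_add_inclLBar,
    hL.br_self_eq_zero_of_mem_zero hchar ((g 0).smul_mem _ h₀), map_zero]
end

section
/- Let L be a just infinite Lie superalgebra over a field of characteristic ≠ 2. Then the Jordan double Jor(L) is just infinite. -/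
/-- If a Lie superalgebra `L` is just infinite, then its Jordan
double `Jor(L)` is just infinite. -/
theorem jordan_double_just_infinite
    (K : Type) [Field K] (hchar : (2 : K) ≠ 0)
    {V : Type} [AddCommGroup V] [Module K V]
    (g : ZMod 2 → Submodule K V) (br : V →ₗ[K] V →ₗ[K] V)
    (hL : IsLieSuper K g br)
    (μ : (K × V) × (K × V) →ₗ[K] (K × V) × (K × V) →ₗ[K] (K × V) × (K × V))
    (hμ : JorRules K g br μ)
    (hJI : JustInfinite K br) :
    JustInfinite K μ := by

  obtain ⟨hinf, hquot⟩ := hJI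
  constructor
  · intro hW
    exact hinf (FiniteDimensional.of_injective (inclL K V)
      (fun a b h => by simpa [inclL, Prod.ext_iff] using h))
  · intro I hI hIne
    set J : Submodule K V := Submodule.comap (inclL K V) I with hJdef
    -- basic facts about J
    have hJmem : ∀ v : V, v ∈ J ↔ inclL K V v ∈ I := fun v => Iff.rfl
    have hbarJ : ∀ v, inclL K V v ∈ I → inclLBar K V v ∈ I := by
      intro v hv
      have := (hI (jBarOne K V) _ hv).2
      rwa [hμ.l_obar] at this
    have hJideal : IsIdeal K br J := by
      intro a b hb
      rw [hJmem] at hb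
      constructor
      · show inclL K V (br a b) ∈ I
        rw [← hμ.lbar_lbar]
        exact (hI (inclLBar K V a) _ (hbarJ b hb)).1
      · show inclL K V (br b a) ∈ I
        rw [← hμ.lbar_lbar]
        exact (hI (inclLBar K V a) _ (hbarJ b hb)).2
    -- triviality of central elements
    have hcentral : ∀ v : V, v ≠ 0 → (∀ a, br v a = 0) → (∀ a, br a v = 0) → False := by
      intro v hv h1 h2
      have hId : IsIdeal K br (Submodule.span K {v}) := by
        intro a b hb
        obtain ⟨c, rfl⟩ := Submodule.mem_span_singleton.mp hb
        constructor
        · have : br a (c • v) = 0 := by rw [map_smul, h2 a, smul_zero]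
          rw [this]; exact Submodule.zero_mem _
        · have : br (c • v) a = 0 := by
            rw [map_smul, LinearMap.smul_apply, h1 a, smul_zero]
          rw [this]; exact Submodule.zero_mem _
      have h3 : FiniteDimensional K (V ⧸ Submodule.span K ({v} : Set V)) :=
        hquot _ hId (by simpa [Submodule.span_singleton_eq_bot] using hv)
      have h4 : FiniteDimensional K (Submodule.span K ({v} : Set V)) := inferInstance
      have h5 : IsNoetherian K V := by
        rw [isNoetherian_iff_submodule_quotient (Submodule.span K ({v} : Set V))]
        exact ⟨IsNoetherian.iff_fg.mpr h4, IsNoetherian.iff_fg.mpr h3⟩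
      exact hinf (IsNoetherian.iff_fg.mp h5)
    -- if all brackets lie in J then J is nonzero
    have hbrJ : (∀ z u : V, br z u ∈ J) → J ≠ ⊥ := by
      intro h hbot
      have hz : ∀ z u : V, br z u = 0 := by
        intro z u
        have := h z u
        rw [hbot] at this
        simpa using this
      obtain ⟨v, hv⟩ : ∃ v : V, v ≠ 0 := by
        by_contra hc
        push_neg at hc
        exact hinf (Module.Finite.of_surjective (0 : (Fin 1 → K) →ₗ[K] V)
          (fun v => ⟨0, by simp [hc v]⟩))
      exact hcentral v hv (fun a => hz v a) (fun a => hz a v)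
    -- choose a nonzero element of I
    obtain ⟨w, hwI, hw0⟩ := (Submodule.ne_bot_iff I).mp hIne
    obtain ⟨⟨α, x⟩, β, y⟩ := w
    have hw : ((α, x), (β, y)) =
        α • jOne K V + inclL K V x + β • jBarOne K V + inclLBar K V y := by
      simp [jOne, jBarOne, inclL, inclLBar, Prod.ext_iff]
    -- derived memberships
    have eA : ∀ z : V, μ (((α, x), (β, y)) : (K × V) × (K × V)) (inclLBar K V z)
        = α • inclLBar K V z + inclL K V (br y z) := by
      intro z
      rw [hw]
      simp [map_add, map_smul, LinearMap.add_apply, LinearMap.smul_apply,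
        hμ.one_mul, hμ.l_lbar, hμ.obar_lbar, hμ.lbar_lbar]
    have eB : ∀ z : V, μ (inclLBar K V z) (((α, x), (β, y)) : (K × V) × (K × V))
        = α • inclLBar K V z + inclL K V (br z y) := by
      intro z
      rw [hw]
      simp [map_add, map_smul, hμ.mul_one, hμ.lbar_l, hμ.lbar_obar, hμ.lbar_lbar]
    have eC : μ (((α, x), (β, y)) : (K × V) × (K × V)) (jBarOne K V)
        = α • jBarOne K V + inclLBar K V x := by
      rw [hw]
      simp [map_add, map_smul, LinearMap.add_apply, LinearMap.smul_apply,
        hμ.one_mul, hμ.l_obar, hμ.obar_obar, hμ.lbar_obar]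
    have hA : ∀ z : V, α • inclLBar K V z + inclL K V (br y z) ∈ I := by
      intro z
      have := (hI (inclLBar K V z) _ hwI).2
      rwa [eA z] at this
    have hB : ∀ z : V, α • inclLBar K V z + inclL K V (br z y) ∈ I := by
      intro z
      have := (hI (inclLBar K V z) _ hwI).1
      rwa [eB z] at this
    have hC : α • jBarOne K V + inclLBar K V x ∈ I := by
      have := (hI (jBarOne K V) _ hwI).2
      rwa [eC] at this
    have hxJ : ∀ z : V, br x z ∈ J ∧ br z x ∈ J := by
      intro z
      constructor
      · show inclL K V (br x z) ∈ I
        have h1 := (hI (inclLBar K V z) _ hC).2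
        have : μ (α • jBarOne K V + inclLBar K V x) (inclLBar K V z)
            = inclL K V (br x z) := by
          simp [map_add, map_smul, LinearMap.add_apply, LinearMap.smul_apply,
            hμ.obar_lbar, hμ.lbar_lbar]
        rwa [this] at h1
      · show inclL K V (br z x) ∈ I
        have h1 := (hI (inclLBar K V z) _ hC).1
        have : μ (inclLBar K V z) (α • jBarOne K V + inclLBar K V x)
            = inclL K V (br z x) := by
          simp [map_add, map_smul, hμ.lbar_obar, hμ.lbar_lbar]
        rwa [this] at h1
    -- main claim: J is nonzero
    have hJne : J ≠ ⊥ := by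
      by_cases hα : α = 0
      · -- brackets with x and y are in J
        have hyJ : ∀ z : V, br y z ∈ J ∧ br z y ∈ J := by
          intro z
          constructor
          · show inclL K V (br y z) ∈ I
            have := hA z
            rwa [hα, zero_smul, zero_add] at this
          · show inclL K V (br z y) ∈ I
            have := hB z
            rwa [hα, zero_smul, zero_add] at this
        by_cases hJb : J = ⊥
        · exfalso
          have hzero : ∀ v, v ∈ J → v = 0 := by
            intro v hv; rw [hJb] at hv; simpa using hv
          -- x and y are central, hence zero
          have hx0 : x = 0 := by
            by_contra hx
            exact hcentral x hx (fun a => hzero _ (hxJ a).1) (fun a => hzero _ (hxJ a).2)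
          have hy0 : y = 0 := by
            by_contra hy
            exact hcentral y hy (fun a => hzero _ (hyJ a).1) (fun a => hzero _ (hyJ a).2)
          have hβ : β ≠ 0 := by
            intro hb
            exact hw0 (by simp [hx0, hy0, hα, hb, Prod.ext_iff])
          have hob : jBarOne K V ∈ I := by
            have h1 : (β⁻¹ : K) • (((α, x), (β, y)) : (K × V) × (K × V)) ∈ I :=
              I.smul_mem _ hwI
            have : (β⁻¹ : K) • (((α, x), (β, y)) : (K × V) × (K × V)) = jBarOne K V := by
              simp [hα, hx0, hy0, jBarOne, Prod.ext_iff, Prod.smul_def,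
                inv_mul_cancel₀ hβ]
            rwa [this] at h1
          have hLb : ∀ z : V, inclLBar K V z ∈ I := by
            intro z
            have := (hI (inclL K V z) _ hob).1
            rwa [hμ.l_obar] at this
          have hall : ∀ z u : V, br z u ∈ J := by
            intro z u
            show inclL K V (br z u) ∈ I
            rw [← hμ.lbar_lbar]
            exact (hI (inclLBar K V z) _ (hLb u)).1
          exact (hbrJ hall) hJb
        · exact hJb
      · -- α ≠ 0 : all brackets are in J
        apply hbrJ
        intro z u
        show inclL K V (br z u) ∈ I
        have h1 := (hI (inclLBar K V z) _ (hA u)).1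
        have h2 : μ (inclLBar K V z) (α • inclLBar K V u + inclL K V (br y u))
            = α • inclL K V (br z u) := by
          simp [map_add, map_smul, hμ.lbar_l, hμ.lbar_lbar]
        rw [h2] at h1
        have := I.smul_mem (α⁻¹ : K) h1
        rwa [smul_smul, inv_mul_cancel₀ hα, one_smul] at this
    -- conclude: finite codimension
    have hQ : FiniteDimensional K (V ⧸ J) := hquot J hJideal hJne
    set q : (K × V) × (K × V) →ₗ[K] (K × (V ⧸ J)) × (K × (V ⧸ J)) :=
      ((LinearMap.id : K →ₗ[K] K).prodMap J.mkQ).prodMap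
        ((LinearMap.id : K →ₗ[K] K).prodMap J.mkQ) with hq
    have hqs : Function.Surjective q := by
      rintro ⟨⟨a, xq⟩, b, yq⟩
      obtain ⟨x0, rfl⟩ := J.mkQ_surjective xq
      obtain ⟨y0, rfl⟩ := J.mkQ_surjective yq
      exact ⟨((a, x0), (b, y0)), rfl⟩
    have hker : LinearMap.ker q ≤ I := by
      rintro ⟨⟨a, x0⟩, b, y0⟩ hmem
      rw [LinearMap.mem_ker, hq] at hmem
      simp only [LinearMap.prodMap_apply, LinearMap.id_apply, Prod.mk_eq_zero,
        Prod.ext_iff] at hmem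
      obtain ⟨⟨ha, hx0⟩, hb, hy0⟩ := hmem
      have hx0' : x0 ∈ J := by rwa [← Submodule.Quotient.mk_eq_zero, ← Submodule.mkQ_apply]
      have hy0' : y0 ∈ J := by rwa [← Submodule.Quotient.mk_eq_zero, ← Submodule.mkQ_apply]
      have heq : ((a, x0), (b, y0)) = inclL K V x0 + inclLBar K V y0 := by
        simp [ha, hb, inclL, inclLBar, Prod.ext_iff]
      rw [heq]
      exact I.add_mem hx0' (hbarJ _ hy0')
    have hfin1 : FiniteDimensional K (((K × V) × (K × V)) ⧸ LinearMap.ker q) :=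
      Module.Finite.equiv (LinearMap.quotKerEquivOfSurjective q hqs).symm
    have hle : LinearMap.ker q ≤ Submodule.comap (LinearMap.id : (K × V) × (K × V) →ₗ[K] _) I := by
      simpa using hker
    exact Module.Finite.of_surjective (Submodule.mapQ (LinearMap.ker q) I LinearMap.id hle)
      (fun z => by
        obtain ⟨w', rfl⟩ := Submodule.Quotient.mk_surjective I z
        exact ⟨Submodule.Quotient.mk w', by simp [Submodule.mapQ_apply]⟩)
end

section
/- Let H ⊆ Jor(L) be an ideal, H̃ = H ∩ (L ⊕ L̄), and let H₀, H₁ ⊆ L be the projections of H̃ to L and L̄ respectively (identifying L̄ with L). Then [L,H₁] ⊆ H₀ ⊆ H₁, and in particular H₀ is an ideal of the Lie superalgebra L. -/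
/-- Let `H` be an ideal of `Jor(L)`, `H̃ = H ∩ (L ⊕ L̄)`, and let
`H₀`, `H₁ ⊆ L` be the projections of `H̃` to `L` and `L̄` (the latter identified
with `L`).  Then `[L, H₁] ⊆ H₀ ⊆ H₁`; in particular `H₀` is an ideal of the Lie
superalgebra `L`. -/
theorem jordan_double_ideal_projections
    (K : Type) [Field K] (hchar : (2 : K) ≠ 0)
    {V : Type} [AddCommGroup V] [Module K V]
    (g : ZMod 2 → Submodule K V) (br : V →ₗ[K] V →ₗ[K] V)
    (hL : IsLieSuper K g br)
    (μ : (K × V) × (K × V) →ₗ[K] (K × V) × (K × V) →ₗ[K] (K × V) × (K × V))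
    (hμ : JorRules K g br μ)
    (H : Submodule K ((K × V) × (K × V))) (hH : IsIdeal K μ H)
    (Htilde : Submodule K ((K × V) × (K × V)))
    (hHt : Htilde
      = H ⊓ ((⊥ : Submodule K K).prod ⊤).prod ((⊥ : Submodule K K).prod ⊤))
    (H₀ H₁ : Submodule K V)
    (hH₀ : H₀ = Submodule.map
      ((LinearMap.snd K K V).comp (LinearMap.fst K (K × V) (K × V))) Htilde)
    (hH₁ : H₁ = Submodule.map
      ((LinearMap.snd K K V).comp (LinearMap.snd K (K × V) (K × V))) Htilde) :
    (∀ z : V, ∀ x ∈ H₁, br z x ∈ H₀) ∧ H₀ ≤ H₁ ∧ IsIdeal K br H₀ := by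
  -- membership of embedded elements in the "no-unit" part
  have hmemL : ∀ x : V, inclL K V x ∈
      ((⊥ : Submodule K K).prod ⊤).prod ((⊥ : Submodule K K).prod ⊤) := by
    intro x; simp [inclL, Submodule.mem_prod]
  have hmemLB : ∀ x : V, inclLBar K V x ∈
      ((⊥ : Submodule K K).prod ⊤).prod ((⊥ : Submodule K K).prod ⊥ ⊔ (⊥ : Submodule K K).prod ⊤) := by
    intro x; simp [inclLBar, Submodule.mem_prod]
  have hmemLB' : ∀ x : V, inclLBar K V x ∈
      ((⊥ : Submodule K K).prod ⊤).prod ((⊥ : Submodule K K).prod ⊤) := by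
    intro x; simp [inclLBar, Submodule.mem_prod]
  -- decomposition of an element of Htilde
  have hdec : ∀ w ∈ Htilde, w = inclL K V w.1.2 + inclLBar K V w.2.2 ∧ w ∈ H := by
    intro w hw
    rw [hHt, Submodule.mem_inf] at hw
    obtain ⟨hwH, hw2⟩ := hw
    rw [Submodule.mem_prod] at hw2
    obtain ⟨h1, h2⟩ := hw2
    rw [Submodule.mem_prod] at h1 h2
    have e1 : w.1.1 = 0 := by simpa using h1.1
    have e2 : w.2.1 = 0 := by simpa using h2.1
    refine ⟨?_, hwH⟩
    have : w = ((w.1.1, w.1.2), (w.2.1, w.2.2)) := rfl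
    rw [this, e1, e2]
    simp [inclL, inclLBar, Prod.ext_iff]
  -- inclL u ∈ H implies u ∈ H₀
  have hL0 : ∀ u : V, inclL K V u ∈ H → u ∈ H₀ := by
    intro u hu
    rw [hH₀]
    refine ⟨inclL K V u, ?_, ?_⟩
    · rw [hHt]; exact ⟨hu, hmemL u⟩
    · simp [inclL]
  -- inclLBar u ∈ H implies u ∈ H₁
  have hL1 : ∀ u : V, inclLBar K V u ∈ H → u ∈ H₁ := by
    intro u hu
    rw [hH₁]
    refine ⟨inclLBar K V u, ?_, ?_⟩
    · rw [hHt]; exact ⟨hu, hmemLB' u⟩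
    · simp [inclLBar]
  -- membership in H₁ : get a witness
  have hW1 : ∀ y ∈ H₁, ∃ w ∈ Htilde, w.2.2 = y := by
    intro y hy
    rw [hH₁] at hy
    obtain ⟨w, hw, hwy⟩ := hy
    exact ⟨w, hw, hwy⟩
  -- claim A : [L, H₁] ⊆ H₀
  have claimA : ∀ z : V, ∀ y ∈ H₁, br z y ∈ H₀ := by
    intro z y hy
    obtain ⟨w, hw, hwy⟩ := hW1 y hy
    obtain ⟨hweq, hwH⟩ := hdec w hw
    have hμw : μ (inclLBar K V z) w = inclL K V (br z y) := by
      rw [hweq, map_add, hμ.lbar_l, hμ.lbar_lbar, hwy, zero_add]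
    have : μ (inclLBar K V z) w ∈ H := (hH (inclLBar K V z) w hwH).1
    rw [hμw] at this
    exact hL0 _ this
  -- claim B : [H₁, L] ⊆ H₀
  have claimB : ∀ z : V, ∀ y ∈ H₁, br y z ∈ H₀ := by
    intro z y hy
    obtain ⟨w, hw, hwy⟩ := hW1 y hy
    obtain ⟨hweq, hwH⟩ := hdec w hw
    have hμw : μ w (inclLBar K V z) = inclL K V (br y z) := by
      rw [hweq, map_add, LinearMap.add_apply, hμ.l_lbar, hμ.lbar_lbar, hwy, zero_add]
    have : μ w (inclLBar K V z) ∈ H := (hH (inclLBar K V z) w hwH).2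
    rw [hμw] at this
    exact hL0 _ this
  -- H₀ ≤ H₁
  have hle : H₀ ≤ H₁ := by
    intro x hx
    rw [hH₀] at hx
    obtain ⟨w, hw, hwx⟩ := hx
    obtain ⟨hweq, hwH⟩ := hdec w hw
    have hμw : μ w (jBarOne K V) = inclLBar K V x := by
      rw [hweq, map_add, LinearMap.add_apply, hμ.l_obar, hμ.lbar_obar, add_zero, ← hwx]
      rfl
    have : μ w (jBarOne K V) ∈ H := (hH (jBarOne K V) w hwH).2
    rw [hμw] at this
    exact hL1 _ this
  refine ⟨claimA, hle, ?_⟩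
  intro a b hb
  exact ⟨claimA a b (hle hb), claimB a b (hle hb)⟩
end

section
/- Let P be a Poisson superalgebra and J = Kan(P) = P ⊕ P̄ its Kantor double. The map D: J → J defined by D(a) = 0 for a ∈ P and D(ā) = (-1)^{|a|} a for ā ∈ P̄ is an odd superderivation of the Jordan superalgebra J satisfying D² = 0. -/
lemma sgn_add (K : Type) [Field K] (i j : ZMod 2) : sgn K (i + j) = sgn K i * sgn K j := by
  fin_cases i <;> fin_cases j
  exacts [(mul_one 1).symm, (one_mul _).symm, (mul_one _).symm,
    ((neg_mul_neg (1 : K) 1).trans (mul_one 1)).symm]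

lemma sgn_mul_self (K : Type) [Field K] (i : ZMod 2) : sgn K i * sgn K i = 1 := by
  rw [← sgn_add, CharTwo.add_self_eq_zero, sgn_zero]

theorem DirectSum.IsInternal.linearMap_ext {R ι M N : Type*} [Semiring R] [DecidableEq ι]
    [AddCommMonoid M] [Module R M] [AddCommMonoid N] [Module R N] {g : ι → Submodule R M}
    (hg : DirectSum.IsInternal g) {f f' : M →ₗ[R] N} (h : ∀ i, ∀ x ∈ g i, f x = f' x) :
    f = f' :=
  LinearMap.ext_on (s := ⋃ i, (g i : Set M))
    (by rw [← Submodule.iSup_eq_span, hg.submodule_iSup_eq_top])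
    fun _ hx ↦ let ⟨i, hi⟩ := Set.mem_iUnion.mp hx; h i _ hi

theorem DirectSum.IsInternal.linearMap_prod_ext {R ι M N : Type*} [Semiring R] [DecidableEq ι]
    [AddCommMonoid M] [Module R M] [AddCommMonoid N] [Module R N] {g : ι → Submodule R M}
    (hg : DirectSum.IsInternal g) {f f' : M × M →ₗ[R] N}
    (hl : ∀ i, ∀ x ∈ g i, f (x, 0) = f' (x, 0)) (hr : ∀ i, ∀ x ∈ g i, f (0, x) = f' (0, x)) :
    f = f' :=
  LinearMap.prod_ext (hg.linearMap_ext hl) (hg.linearMap_ext hr)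

namespace KantorDouble

variable {K : Type} [Field K] {V : Type} [AddCommGroup V] [Module K V]
  {g : ZMod 2 → Submodule K V} {m p : V →ₗ[K] V →ₗ[K] V} {μ : V × V →ₗ[K] V × V →ₗ[K] V × V}
  {D : V × V →ₗ[K] V × V}

lemma D_apply (hD_plain : ∀ a : V, D (a, 0) = 0)
    (hD_bar : ∀ i : ZMod 2, ∀ a ∈ g i, D (0, a) = (sgn K i • a, 0))
    {j : ZMod 2} (x : V) {y : V} (hy : y ∈ g j) : D (x, y) = sgn K j • (y, 0) := by
  rw [show (x, y) = (x, 0) + (0, y) by simp, map_add, hD_plain, hD_bar j y hy, zero_add,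
    Prod.smul_mk_zero]

lemma D_comp_D (hg : DirectSum.IsInternal g) (hD_plain : ∀ a : V, D (a, 0) = 0)
    (hD_bar : ∀ i : ZMod 2, ∀ a ∈ g i, D (0, a) = (sgn K i • a, 0)) : D ∘ₗ D = 0 :=
  hg.linearMap_prod_ext (fun _ _ _ ↦ by simp [hD_plain])
    (fun i x hx ↦ by simp [hD_bar i x hx, hD_plain])

lemma D_mem_kanGrading (hD_plain : ∀ a : V, D (a, 0) = 0)
    (hD_bar : ∀ i : ZMod 2, ∀ a ∈ g i, D (0, a) = (sgn K i • a, 0))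
    {i : ZMod 2} {u : V × V} (hu : u ∈ kanGrading K g i) : D u ∈ kanGrading K g (i + 1) := by
  rw [D_apply hD_plain hD_bar u.1 hu.2]
  exact Submodule.smul_mem _ _ ⟨hu.2, zero_mem _⟩

lemma D_mul_plain (hg : DirectSum.IsInternal g) (hm : GradedMul K g m)
    (hμ : KantorRules K g m p μ) (hD_plain : ∀ a : V, D (a, 0) = 0)
    (hD_bar : ∀ i : ZMod 2, ∀ a ∈ g i, D (0, a) = (sgn K i • a, 0))
    {i : ZMod 2} {a : V} (ha : a ∈ g i) (v : V × V) :
    D (μ (a, 0) v) = μ (D (a, 0)) v + sgn K i • μ (a, 0) (D v) := by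
  rw [hD_plain, map_zero, LinearMap.zero_apply, zero_add]
  refine LinearMap.congr_fun (f := D ∘ₗ μ (a, 0)) (g := sgn K i • (μ (a, 0) ∘ₗ D))
    (hg.linearMap_prod_ext (fun j c hc ↦ ?_) (fun j d hd ↦ ?_)) v
  · simp [hμ.plain_plain, hD_plain]
  · simp [hμ.plain_bar, hμ.plain_plain, D_apply hD_plain hD_bar _ (hm i j a ha d hd),
      D_apply hD_plain hD_bar _ hd, sgn_add, smul_smul]

lemma D_mul_bar (hg : DirectSum.IsInternal g) (hm : GradedMul K g m)
    (hμ : KantorRules K g m p μ) (hD_plain : ∀ a : V, D (a, 0) = 0)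
    (hD_bar : ∀ i : ZMod 2, ∀ a ∈ g i, D (0, a) = (sgn K i • a, 0))
    {i : ZMod 2} {b : V} (hb : b ∈ g (i + 1)) (v : V × V) :
    D (μ (0, b) v) = μ (D (0, b)) v + sgn K i • μ (0, b) (D v) := by
  refine LinearMap.congr_fun (f := D ∘ₗ μ (0, b)) (g := μ (D (0, b)) + sgn K i • (μ (0, b) ∘ₗ D))
    (hg.linearMap_prod_ext (fun j c hc ↦ ?_) (fun j d hd ↦ ?_)) v
  · simp [hμ.bar_plain b j c hc, hμ.plain_plain, hD_plain,
      D_apply hD_plain hD_bar _ (Submodule.smul_mem _ (sgn K j) (hm _ j b hb c hc)),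
      D_apply hD_plain hD_bar _ hb, sgn_add, smul_smul, mul_assoc, sgn_mul_self]
  · simp [hμ.bar_plain b j _ (Submodule.smul_mem _ (sgn K j) hd), hμ.plain_bar, hD_plain,
      hμ.bar_bar b j d hd, D_apply hD_plain hD_bar _ hb, D_apply hD_plain hD_bar _ hd, sgn_add,
      smul_smul, sgn_mul_self, Prod.mk_zero_zero]

lemma D_mul (hg : DirectSum.IsInternal g) (hm : GradedMul K g m)
    (hμ : KantorRules K g m p μ) (hD_plain : ∀ a : V, D (a, 0) = 0)
    (hD_bar : ∀ i : ZMod 2, ∀ a ∈ g i, D (0, a) = (sgn K i • a, 0))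
    {i : ZMod 2} {u : V × V} (hu : u ∈ kanGrading K g i) (v : V × V) :
    D (μ u v) = μ (D u) v + sgn K i • μ u (D v) := by
  obtain ⟨a, b⟩ := u
  rw [show (a, b) = (a, 0) + (0, b) by simp]
  simp only [map_add, LinearMap.add_apply, smul_add,
    D_mul_plain hg hm hμ hD_plain hD_bar hu.1, D_mul_bar hg hm hμ hD_plain hD_bar hu.2]
  abel

end KantorDouble

theorem kantor_double_superderivation_general
    (K : Type) [Field K]
    {V : Type} [AddCommGroup V] [Module K V]
    (g : ZMod 2 → Submodule K V) (m p : V →ₗ[K] V →ₗ[K] V) (e : V)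
    (hA : IsPoissonSuper K g m p e)
    (μ : V × V →ₗ[K] V × V →ₗ[K] V × V)
    (hμ : KantorRules K g m p μ)
    (D : V × V →ₗ[K] V × V)
    (hD_plain : ∀ a : V, D (a, 0) = 0)
    (hD_bar : ∀ i : ZMod 2, ∀ a ∈ g i, D (0, a) = (sgn K i • a, 0)) :
    (∀ i : ZMod 2, ∀ u ∈ kanGrading K g i, D u ∈ kanGrading K g (i + 1)) ∧
    (∀ i : ZMod 2, ∀ u ∈ kanGrading K g i, ∀ v : V × V,
      D (μ u v) = μ (D u) v + sgn K i • μ u (D v)) ∧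
    (∀ w : V × V, D (D w) = 0) :=
  ⟨fun _ _ ↦ KantorDouble.D_mem_kanGrading hD_plain hD_bar,
    fun _ _ hu ↦ KantorDouble.D_mul hA.internal hA.m_graded hμ hD_plain hD_bar hu,
    LinearMap.congr_fun (KantorDouble.D_comp_D hA.internal hD_plain hD_bar)⟩

/-- Let `P` be a Poisson superalgebra and `J = Kan(P) = P ⊕ P̄`
its Kantor double.  The map `D : J → J`, `D(a) = 0` for `a ∈ P` and
`D(ā) = (-1)^{|a|} a` for `ā ∈ P̄`, is an odd superderivation of the Jordan
superalgebra `J` with `D² = 0`. -/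
theorem kantor_double_superderivation
    (K : Type) [Field K] (hchar : (2 : K) ≠ 0)
    {V : Type} [AddCommGroup V] [Module K V]
    (g : ZMod 2 → Submodule K V) (m p : V →ₗ[K] V →ₗ[K] V) (e : V)
    (hA : IsPoissonSuper K g m p e)
    (μ : V × V →ₗ[K] V × V →ₗ[K] V × V)
    (hμ : KantorRules K g m p μ)
    (D : V × V →ₗ[K] V × V)
    (hD_plain : ∀ a : V, D (a, 0) = 0)
    (hD_bar : ∀ i : ZMod 2, ∀ a ∈ g i, D (0, a) = (sgn K i • a, 0)) :
    (∀ i : ZMod 2, ∀ u ∈ kanGrading K g i, D u ∈ kanGrading K g (i + 1)) ∧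
    (∀ i : ZMod 2, ∀ u ∈ kanGrading K g i, ∀ v : V × V,
      D (μ u v) = μ (D u) v + sgn K i • μ u (D v)) ∧
    (∀ w : V × V, D (D w) = 0) :=
  kantor_double_superderivation_general K g m p e hA μ hμ D hD_plain hD_bar
end
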